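/- arXiv:1102.3177 — 4 statements merged into one kernel-verified Lean document; each statement's English description precedes it below -/
import Mathlib

section
/- For any two X-splits S₁ = {A₁,B₁} and S₂ = {A₂,B₂} with A₁ ∩ A₂ nonempty, the three splits S₁, S₂, and S₁ ⊔ S₂ := {A₁ ∩ A₂, B₁ ∪ B₂} form a weakly compatible split system. -/
/-- The forbidden configuration in the definition of weak compatibility:
points `a, a₁, a₂, a₃` with `a ∈ A₁ ∩ A₂ ∩ A₃` and `aᵢ ∈ A_j ↔ i = j`. -/
def BadConfig {X : Type*} (A₁ A₂ A₃ : Set X) : Prop :=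
  ∃ a a₁ a₂ a₃ : X, a ∈ A₁ ∩ A₂ ∩ A₃ ∧
    a₁ ∈ A₁ ∧ a₁ ∉ A₂ ∧ a₁ ∉ A₃ ∧
    a₂ ∉ A₁ ∧ a₂ ∈ A₂ ∧ a₂ ∉ A₃ ∧
    a₃ ∉ A₁ ∧ a₃ ∉ A₂ ∧ a₃ ∈ A₃

/-- A system of splits (each split recorded as an ordered pair of its two blocks) is
weakly compatible if no triple of splits, with any choice of blocks, admits a bad
configuration. -/
def WeaklyCompatible {X : Type*} (𝒮 : Set (Set X × Set X)) : Prop :=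
  ∀ S₁ ∈ 𝒮, ∀ S₂ ∈ 𝒮, ∀ S₃ ∈ 𝒮, ∀ A₁ A₂ A₃ : Set X,
    (A₁ = S₁.1 ∨ A₁ = S₁.2) → (A₂ = S₂.1 ∨ A₂ = S₂.2) → (A₃ = S₃.1 ∨ A₃ = S₃.2) →
    ¬ BadConfig A₁ A₂ A₃

/-!
Since `Bᵢ = Aᵢᶜ`, the third split is `{A₁ ∩ A₂, (A₁ ∩ A₂)ᶜ}`. For a point `a`, each split has
exactly one block containing `a`, so a bad configuration with common point `a` can only use these
blocks, and it needs each of its three blocks to stick out of the union of the other two. Let `U`,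
`V`, `W` be the blocks containing `a` of the splits given by `A₁`, `A₂` and `A₁ ∩ A₂`. According as
`a` lies in `A₁ ∩ A₂`, `A₁ \ A₂`, `A₂ \ A₁` or outside `A₁ ∪ A₂`, we get `W ⊆ U`, `V ⊆ W`, `U ⊆ W`
or `W = U ∪ V`: one block is always covered by the other two.
-/

section BadConfig

variable {X : Type*} {C₁ C₂ C₃ : Set X}

theorem BadConfig.nonempty (h : BadConfig C₁ C₂ C₃) : (C₁ ∩ C₂ ∩ C₃).Nonempty :=
  let ⟨a, _, _, _, ha, _⟩ := h
  ⟨a, ha⟩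

theorem BadConfig.swap₁₂ (h : BadConfig C₁ C₂ C₃) : BadConfig C₂ C₁ C₃ := by
  obtain ⟨a, b₁, b₂, b₃, ⟨⟨ha₁, ha₂⟩, ha₃⟩, hb⟩ := h
  exact ⟨a, b₂, b₁, b₃, ⟨⟨ha₂, ha₁⟩, ha₃⟩, by tauto⟩

theorem BadConfig.rotate (h : BadConfig C₁ C₂ C₃) : BadConfig C₂ C₃ C₁ := by
  obtain ⟨a, b₁, b₂, b₃, ⟨⟨ha₁, ha₂⟩, ha₃⟩, hb⟩ := h
  exact ⟨a, b₂, b₃, b₁, ⟨⟨ha₂, ha₃⟩, ha₁⟩, by tauto⟩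

theorem BadConfig.not_subset_union₁ (h : BadConfig C₁ C₂ C₃) : ¬ C₁ ⊆ C₂ ∪ C₃ := by
  obtain ⟨-, b, -, -, -, hb₁, hb₂, hb₃, -⟩ := h
  exact fun hsub ↦ (hsub hb₁).elim hb₂ hb₃

theorem BadConfig.not_subset_union₂ (h : BadConfig C₁ C₂ C₃) : ¬ C₂ ⊆ C₁ ∪ C₃ :=
  h.swap₁₂.not_subset_union₁

theorem BadConfig.not_subset_union₃ (h : BadConfig C₁ C₂ C₃) : ¬ C₃ ⊆ C₁ ∪ C₂ :=
  h.rotate.rotate.not_subset_union₁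

theorem BadConfig.ne₁₂ (h : BadConfig C₁ C₂ C₃) : C₁ ≠ C₂ := by
  rintro rfl
  exact h.not_subset_union₁ Set.subset_union_left

theorem BadConfig.ne₂₃ (h : BadConfig C₁ C₂ C₃) : C₂ ≠ C₃ :=
  h.rotate.ne₁₂

theorem BadConfig.ne₁₃ (h : BadConfig C₁ C₂ C₃) : C₁ ≠ C₃ :=
  fun h₁₃ ↦ h.rotate.rotate.ne₁₂ h₁₃.symm

end BadConfig

def splitBlock {X : Type*} (D : Set X) (a : X) : Set X := {x | x ∈ D ↔ a ∈ D}

section splitBlock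

variable {X : Type*}

theorem eq_splitBlock {C D : Set X} {a : X} (hC : C = D ∨ C = Dᶜ) (ha : a ∈ C) :
    C = splitBlock D a := by
  ext x
  rcases hC with rfl | rfl <;> simp_all [splitBlock]

theorem weaklyCompatible_of_forall_splitBlock (𝒟 : Set (Set X))
    (h : ∀ a, ∀ D₁ ∈ 𝒟, ∀ D₂ ∈ 𝒟, ∀ D₃ ∈ 𝒟,
      ¬ BadConfig (splitBlock D₁ a) (splitBlock D₂ a) (splitBlock D₃ a)) :
    WeaklyCompatible ((fun D ↦ (D, Dᶜ)) '' 𝒟) := by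
  rintro _ ⟨D₁, hD₁, rfl⟩ _ ⟨D₂, hD₂, rfl⟩ _ ⟨D₃, hD₃, rfl⟩ C₁ C₂ C₃ hC₁ hC₂ hC₃ hbad
  obtain ⟨a, ⟨ha₁, ha₂⟩, ha₃⟩ := hbad.nonempty
  rw [eq_splitBlock hC₁ ha₁, eq_splitBlock hC₂ ha₂, eq_splitBlock hC₃ ha₃] at hbad
  exact h a D₁ hD₁ D₂ hD₂ D₃ hD₃ hbad

theorem not_badConfig_splitBlock_inter (P Q : Set X) (a : X) :
    ¬ BadConfig (splitBlock P a) (splitBlock Q a) (splitBlock (P ∩ Q) a) := by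
  intro hbad
  by_cases hP : a ∈ P <;> by_cases hQ : a ∈ Q
  · exact hbad.not_subset_union₃ fun x hx ↦ by simp_all [splitBlock]
  · exact hbad.not_subset_union₂ fun x hx ↦ by simp_all [splitBlock]
  · exact hbad.not_subset_union₁ fun x hx ↦ by simp_all [splitBlock]
  · exact hbad.not_subset_union₃ fun x hx ↦ by simp_all [splitBlock]; tauto

theorem weaklyCompatible_inter (P Q : Set X) :
    WeaklyCompatible {(P, Pᶜ), (Q, Qᶜ), (P ∩ Q, (P ∩ Q)ᶜ)} := by
  convert weaklyCompatible_of_forall_splitBlock {P, Q, P ∩ Q} ?_ using 1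
  · simp [Set.image_insert_eq]
  intro a D₁ hD₁ D₂ hD₂ D₃ hD₃ hbad
  have hPQ := not_badConfig_splitBlock_inter P Q a
  simp only [Set.mem_insert_iff, Set.mem_singleton_iff] at hD₁ hD₂ hD₃
  rcases hD₁ with rfl | rfl | rfl <;> rcases hD₂ with rfl | rfl | rfl <;>
    rcases hD₃ with rfl | rfl | rfl
  -- equal `Dᵢ` give equal blocks; otherwise the `Dᵢ` are `P`, `Q`, `P ∩ Q` in some order
  all_goals first
    | exact hbad.ne₁₂ rfl | exact hbad.ne₁₃ rfl | exact hbad.ne₂₃ rfl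
    | exact hPQ hbad | exact hPQ hbad.rotate | exact hPQ hbad.rotate.rotate
    | exact hPQ hbad.swap₁₂ | exact hPQ hbad.swap₁₂.rotate | exact hPQ hbad.swap₁₂.rotate.rotate

end splitBlock

theorem stmt2_general {X : Type*} (A₁ B₁ A₂ B₂ : Set X)
    (h₁u : A₁ ∪ B₁ = Set.univ) (h₁d : A₁ ∩ B₁ = ∅)
    (h₂u : A₂ ∪ B₂ = Set.univ) (h₂d : A₂ ∩ B₂ = ∅) :
    WeaklyCompatible {(A₁, B₁), (A₂, B₂), (A₁ ∩ A₂, B₁ ∪ B₂)} := by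
  obtain rfl : B₁ = A₁ᶜ := (IsCompl.of_eq h₁d h₁u).compl_eq.symm
  obtain rfl : B₂ = A₂ᶜ := (IsCompl.of_eq h₂d h₂u).compl_eq.symm
  rw [← Set.compl_inter]
  exact weaklyCompatible_inter A₁ A₂

/-- The splits `S₁ = {A₁,B₁}`, `S₂ = {A₂,B₂}` and `S₁ ⊔ S₂ = {A₁ ∩ A₂, B₁ ∪ B₂}`
form a weakly compatible split system. -/
theorem stmt2 {X : Type*} (A₁ B₁ A₂ B₂ : Set X)
    (h₁u : A₁ ∪ B₁ = Set.univ) (h₁d : A₁ ∩ B₁ = ∅) (h₁ : A₁.Nonempty) (h₁' : B₁.Nonempty)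
    (h₂u : A₂ ∪ B₂ = Set.univ) (h₂d : A₂ ∩ B₂ = ∅) (h₂ : A₂.Nonempty) (h₂' : B₂.Nonempty)
    (hAA : (A₁ ∩ A₂).Nonempty) :
    WeaklyCompatible {(A₁, B₁), (A₂, B₂), (A₁ ∩ A₂, B₁ ∪ B₂)} :=
  stmt2_general A₁ B₁ A₂ B₂ h₁u h₁d h₂u h₂d
end

section
/- A circular split system over a set of cardinality n contains at most n(n-3)/2 distinct non-trivial splits, with equality achieved by the set of all splits induced by diagonals of a convex n-gon under a fixed circular ordering. -/
/-!
Parametrise circular splits by pairs `(i, l)` with `2 ≤ l ≤ n - 2`: the arc of length `l`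
starting at position `i` together with its complement. The complement is again an arc, of
length `n - l` starting at `i + l`, and these are the only two parameters of a split; hence the
`n (n - 3)` parameters cover the circular splits exactly two-to-one.
-/

/-- `A` is an arc of the circular ordering given by `σ`. -/
def IsArc {n : ℕ} (σ : Equiv.Perm (ZMod n)) (A : Finset (ZMod n)) : Prop :=
  ∃ (i : ZMod n) (l : ℕ), A = (Finset.range l).image fun k : ℕ => σ (i + (k : ZMod n))

/-- `P` is a non-trivial split of `ZMod n` which is circular with respect to `σ`:
`P = {A, Aᶜ}` where both blocks have at least two elements and one of them is an arc. -/
def IsCircSplit {n : ℕ} [NeZero n] (σ : Equiv.Perm (ZMod n))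
    (P : Finset (Finset (ZMod n))) : Prop :=
  ∃ A : Finset (ZMod n), P = {A, Aᶜ} ∧ 2 ≤ A.card ∧ 2 ≤ Aᶜ.card ∧
    (IsArc σ A ∨ IsArc σ Aᶜ)

open Finset

lemma Finset.card_eq_mul_card_image_of_forall_card_fiber {α β : Type*} [DecidableEq β]
    {s : Finset α} {f : α → β} {k : ℕ} (h : ∀ a ∈ s, #{b ∈ s | f b = f a} = k) :
    #s = k * #(s.image f) := by
  rw [card_eq_sum_card_image f s, mul_comm, ← smul_eq_mul, ← sum_const]
  refine sum_congr rfl fun x hx => ?_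
  obtain ⟨a, ha, rfl⟩ := mem_image.1 hx
  exact h a ha

lemma ZMod.natCast_eq_natCast_iff_of_lt {n a b : ℕ} (ha : a < n) (hb : b < n) :
    (a : ZMod n) = b ↔ a = b := by
  rw [ZMod.natCast_eq_natCast_iff', Nat.mod_eq_of_lt ha, Nat.mod_eq_of_lt hb]

section Arcs

variable {n : ℕ} (σ : Equiv.Perm (ZMod n))

def arc (i : ZMod n) (l : ℕ) : Finset (ZMod n) :=
  (range l).image fun k : ℕ => σ (i + k)

lemma mem_arc {x i : ZMod n} {l : ℕ} : x ∈ arc σ i l ↔ ∃ k < l, σ (i + k) = x := by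
  simp [arc]

lemma card_arc (i : ZMod n) {l : ℕ} (hl : l ≤ n) : #(arc σ i l) = l := by
  rw [arc, card_image_of_injOn, card_range]
  intro a ha b hb hab
  simp only [coe_range, Set.mem_Iio] at ha hb
  exact (ZMod.natCast_eq_natCast_iff_of_lt (by omega) (by omega)).1
    (add_left_cancel (σ.injective hab))

variable [NeZero n]

lemma arc_eq_univ (i : ZMod n) {l : ℕ} (hl : n ≤ l) : arc σ i l = univ := by
  refine eq_univ_of_forall fun x => (mem_arc σ).2
    ⟨(σ.symm x - i).val, (ZMod.val_lt _).trans_le hl, ?_⟩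
  simp

lemma compl_arc (i : ZMod n) {l : ℕ} (hl : l ≤ n) :
    (arc σ i l)ᶜ = arc σ (i + l) (n - l) := by
  refine (eq_of_subset_of_card_le (fun x hx => ?_) ?_).symm
  · obtain ⟨k, hk, rfl⟩ := (mem_arc σ).1 hx
    rw [mem_compl, mem_arc]
    rintro ⟨k', hk', hk'x⟩
    have : (k' : ZMod n) = (l + k : ℕ) := by
      push_cast
      rw [add_assoc] at hk'x
      exact add_left_cancel (σ.injective hk'x)
    have := (ZMod.natCast_eq_natCast_iff_of_lt (by omega) (by omega)).1 this
    omega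
  · rw [card_compl, ZMod.card, card_arc σ _ hl, card_arc σ _ (Nat.sub_le n l)]

lemma pred_notMem_arc (i : ZMod n) {l : ℕ} (hl : l < n) : σ (i - 1) ∉ arc σ i l := by
  rw [mem_arc]
  rintro ⟨k, hk, hkx⟩
  have : (k : ZMod n) = (n - 1 : ℕ) := by
    rw [Nat.cast_pred (NeZero.pos n), ZMod.natCast_self, zero_sub]
    exact add_left_cancel ((σ.injective hkx).trans (sub_eq_add_neg i 1))
  have := (ZMod.natCast_eq_natCast_iff_of_lt (by omega) (by omega)).1 this
  omega

/-- A proper non-empty arc determines its starting point: if `j = i + k` with `0 < k < l`, then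
the predecessor of `j` lies in the arc starting at `i` but not in the one starting at `j`. -/
lemma arc_injective {l : ℕ} (hl0 : 0 < l) (hl : l < n) :
    Function.Injective fun i => arc σ i l := by
  intro i j (h : arc σ i l = arc σ j l)
  obtain ⟨k, hk, hkj⟩ := (mem_arc σ).1 (h ▸ (mem_arc σ).2 ⟨0, hl0, by simp⟩ : σ j ∈ arc σ i l)
  have hj : j = i + k := by simpa using (σ.injective hkj).symm
  obtain rfl | hk0 := Nat.eq_zero_or_pos k
  · simpa using hj.symm
  · refine absurd ?_ (pred_notMem_arc σ j hl)
    rw [← h, mem_arc]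
    refine ⟨k - 1, by omega, ?_⟩
    rw [hj, Nat.cast_pred hk0, add_sub_assoc]

end Arcs

def arcParams (n : ℕ) [NeZero n] : Finset (ZMod n × ℕ) :=
  univ ×ˢ Icc 2 (n - 2)

lemma card_arcParams (n : ℕ) [NeZero n] : #(arcParams n) = n * (n - 3) := by
  rw [arcParams, card_product, card_univ, ZMod.card, Nat.card_Icc]
  congr 1

section Splits

variable {n : ℕ} [NeZero n] (σ : Equiv.Perm (ZMod n))

def arcSplit (i : ZMod n) (l : ℕ) : Finset (Finset (ZMod n)) :=
  {arc σ i l, (arc σ i l)ᶜ}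

lemma arcSplit_add_sub (i : ZMod n) {l : ℕ} (hl : l ≤ n) :
    arcSplit σ (i + l) (n - l) = arcSplit σ i l := by
  rw [arcSplit, arcSplit, ← compl_arc σ i hl, compl_compl, pair_comm]

lemma arcSplit_eq_arcSplit_iff {i j : ZMod n} {l m : ℕ} (hl : l ≤ n) (hm0 : 0 < m)
    (hm : m < n) :
    arcSplit σ j m = arcSplit σ i l ↔ (j = i ∧ m = l) ∨ (j = i + l ∧ m = n - l) := by
  constructor
  · intro h
    have hmem : arc σ j m ∈ arcSplit σ i l := h ▸ mem_insert_self _ _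
    rcases mem_insert.1 hmem with h1 | h1
    · have hml : m = l := by simpa [card_arc σ _ hl, card_arc σ _ hm.le] using congrArg card h1
      subst hml
      exact Or.inl ⟨arc_injective σ hm0 hm h1, rfl⟩
    · rw [mem_singleton, compl_arc σ i hl] at h1
      have hml : m = n - l := by
        simpa [card_arc σ _ (Nat.sub_le n l), card_arc σ _ hm.le] using congrArg card h1
      subst hml
      exact Or.inr ⟨arc_injective σ hm0 hm h1, rfl⟩
  · rintro (⟨rfl, rfl⟩ | ⟨rfl, rfl⟩)
    · rfl
    · exact arcSplit_add_sub σ i hl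

lemma filter_arcParams_arcSplit_eq {i : ZMod n} {l : ℕ} (hl : l ∈ Icc 2 (n - 2)) :
    {p ∈ arcParams n | arcSplit σ p.1 p.2 = arcSplit σ i l} = {(i, l), (i + l, n - l)} := by
  rw [mem_Icc] at hl
  ext ⟨j, m⟩
  simp only [arcParams, mem_filter, mem_product, mem_univ, true_and, mem_Icc, mem_insert,
    mem_singleton, Prod.mk.injEq]
  constructor
  · rintro ⟨hm, h⟩
    exact (arcSplit_eq_arcSplit_iff σ (by omega) (by omega) (by omega)).1 h
  · rintro (⟨rfl, rfl⟩ | ⟨rfl, rfl⟩)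
    · exact ⟨hl, rfl⟩
    · exact ⟨by omega, arcSplit_add_sub σ i (by omega)⟩

lemma card_filter_arcParams_arcSplit_eq {i : ZMod n} {l : ℕ} (hl : l ∈ Icc 2 (n - 2)) :
    #{p ∈ arcParams n | arcSplit σ p.1 p.2 = arcSplit σ i l} = 2 := by
  rw [filter_arcParams_arcSplit_eq σ hl, card_pair]
  rw [mem_Icc] at hl
  intro h
  have : ((l : ℕ) : ZMod n) = (0 : ℕ) := by simpa using (Prod.ext_iff.1 h).1
  have := (ZMod.natCast_eq_natCast_iff_of_lt (by omega) (by omega)).1 this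
  omega

def circSplits : Finset (Finset (Finset (ZMod n))) :=
  (arcParams n).image fun p => arcSplit σ p.1 p.2

lemma card_circSplits : #(circSplits σ) = n * (n - 3) / 2 := by
  have h := card_eq_mul_card_image_of_forall_card_fiber
    (f := fun p : ZMod n × ℕ => arcSplit σ p.1 p.2) fun p hp =>
      card_filter_arcParams_arcSplit_eq σ (mem_product.1 hp).2
  rw [card_arcParams n] at h
  rw [circSplits]
  omega

lemma exists_eq_arc_of_isArc {A : Finset (ZMod n)} (hA : IsArc σ A) (h2 : 2 ≤ #A)
    (h2c : 2 ≤ #Aᶜ) : ∃ i, ∃ l ∈ Icc 2 (n - 2), A = arc σ i l := by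
  obtain ⟨i, l, rfl⟩ := hA
  have hl : l ≤ n := by
    by_contra! hlt
    rw [← arc, arc_eq_univ σ i hlt.le] at h2c
    simp at h2c
  rw [← arc, card_compl, ZMod.card, card_arc σ i hl] at h2c
  rw [← arc, card_arc σ i hl] at h2
  exact ⟨i, l, mem_Icc.2 ⟨h2, by omega⟩, rfl⟩

lemma mem_circSplits_iff {P : Finset (Finset (ZMod n))} :
    P ∈ circSplits σ ↔ IsCircSplit σ P := by
  constructor
  · intro hP
    obtain ⟨⟨i, l⟩, hp, rfl⟩ := mem_image.1 hP
    have hl := mem_Icc.1 (mem_product.1 hp).2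
    refine ⟨arc σ i l, rfl, ?_, ?_, Or.inl ⟨i, l, rfl⟩⟩
    · rw [card_arc σ i (by omega)]; omega
    · rw [card_compl, ZMod.card, card_arc σ i (by omega)]; omega
  · rintro ⟨A, rfl, h2, h2c, hA | hA⟩
    · obtain ⟨i, l, hl, rfl⟩ := exists_eq_arc_of_isArc σ hA h2 h2c
      exact mem_image.2 ⟨(i, l), mem_product.2 ⟨mem_univ _, hl⟩, rfl⟩
    · obtain ⟨i, l, hl, hAc⟩ := exists_eq_arc_of_isArc σ hA h2c (by rwa [compl_compl])
      refine mem_image.2 ⟨(i, l), mem_product.2 ⟨mem_univ _, hl⟩, ?_⟩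
      rw [arcSplit, ← hAc, compl_compl, pair_comm]

end Splits

theorem stmt4_general (n : ℕ) [NeZero n] (σ : Equiv.Perm (ZMod n)) :
    (∀ 𝒮 : Finset (Finset (Finset (ZMod n))),
      (∀ P ∈ 𝒮, IsCircSplit σ P) → 𝒮.card ≤ n * (n - 3) / 2) ∧
    {P | IsCircSplit σ P}.ncard = n * (n - 3) / 2 := by
  have hset : {P | IsCircSplit σ P} = ↑(circSplits σ) :=
    Set.ext fun _ => (mem_circSplits_iff σ).symm
  refine ⟨fun 𝒮 h𝒮 => ?_, ?_⟩
  · rw [← card_circSplits σ]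
    exact card_le_card fun P hP => (mem_circSplits_iff σ).2 (h𝒮 P hP)
  · rw [hset, Set.ncard_coe_finset, card_circSplits]

/-- A circular split system over a set of cardinality `n` contains at most
`n(n-3)/2` distinct non-trivial splits, and the set of all splits circular with
respect to a fixed ordering has exactly `n(n-3)/2` elements. -/
theorem stmt4 (n : ℕ) [NeZero n] (hn : 4 ≤ n) (σ : Equiv.Perm (ZMod n)) :
    (∀ 𝒮 : Finset (Finset (Finset (ZMod n))),
      (∀ P ∈ 𝒮, IsCircSplit σ P) → 𝒮.card ≤ n * (n - 3) / 2) ∧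
    {P | IsCircSplit σ P}.ncard = n * (n - 3) / 2 :=
  stmt4_general n σ
end

section
/- Every pair of non-trivial X-splits is contained in some circular split system; equivalently, any two non-trivial X-splits form a circular split system. -/
theorem List.Nodup.append_of_disjoint_toFinset {α : Type*} [DecidableEq α] {l₁ l₂ : List α}
    (h₁ : l₁.Nodup) (h₂ : l₂.Nodup) (h : _root_.Disjoint l₁.toFinset l₂.toFinset) :
    (l₁ ++ l₂).Nodup :=
  h₁.append h₂ (List.disjoint_toFinset_iff_disjoint.mp h)

section CircularOrder

variable {n : ℕ} [NeZero n] {L : List (ZMod n)}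

noncomputable def permOfList (L : List (ZMod n)) (hnd : L.Nodup) (hlen : L.length = n) :
    Equiv.Perm (ZMod n) :=
  Equiv.ofBijective (fun j => L[j.val]'(hlen.symm ▸ j.val_lt)) <|
    Finite.injective_iff_bijective.mp fun _ _ hab =>
      ZMod.val_injective n (hnd.getElem_inj_iff.mp hab)

theorem permOfList_natCast (hnd : L.Nodup) (hlen : L.length = n) {k : ℕ} (hk : k < L.length) :
    permOfList L hnd hlen k = L[k] := by
  simp [permOfList, ZMod.val_cast_of_lt (hlen ▸ hk)]

theorem isArc_permOfList (hnd : L.Nodup) (hlen : L.length = n) {P M S : List (ZMod n)}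
    (hL : L = P ++ M ++ S) : IsArc (permOfList L hnd hlen) M.toFinset := by
  have hσ (k : ℕ) (hk : k < M.length) : permOfList L hnd hlen (P.length + k) = M[k] := by
    subst hL
    rw [← Nat.cast_add, permOfList_natCast hnd hlen (by simp; omega)]
    simp [List.getElem_append_right, List.getElem_append_left, hk]
  refine ⟨P.length, M.length, ?_⟩
  ext x
  simp only [List.mem_toFinset, List.mem_iff_getElem, Finset.mem_image, Finset.mem_range]
  exact exists_congr fun k => ⟨fun ⟨hk, hx⟩ => ⟨hk, hx ▸ hσ k hk⟩,
    fun ⟨hk, hx⟩ => ⟨hk, hσ k hk ▸ hx⟩⟩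

end CircularOrder

theorem stmt5_general (n : ℕ) [NeZero n] (A₁ A₂ : Finset (ZMod n)) :
    ∃ σ : Equiv.Perm (ZMod n),
      (IsArc σ A₁ ∨ IsArc σ A₁ᶜ) ∧ (IsArc σ A₂ ∨ IsArc σ A₂ᶜ) := by
  classical
  set X := (A₁ \ A₂).toList ++ (A₁ ∩ A₂).toList
  set Y := (A₁ᶜ ∩ A₂).toList ++ (A₁ᶜ \ A₂).toList
  have hX : X.toFinset = A₁ := by simp [X, Finset.sdiff_union_inter]
  have hY : Y.toFinset = A₁ᶜ := by
    simpa [Y, Finset.union_comm] using Finset.sdiff_union_inter A₁ᶜ A₂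
  have hnd : (X ++ Y).Nodup := by
    refine .append_of_disjoint_toFinset ?_ ?_ (by rw [hX, hY]; exact disjoint_compl_right)
    · exact (Finset.nodup_toList _).append_of_disjoint_toFinset (Finset.nodup_toList _)
        (by simpa using Finset.disjoint_sdiff_inter A₁ A₂)
    · exact (Finset.nodup_toList _).append_of_disjoint_toFinset (Finset.nodup_toList _)
        (by simpa using (Finset.disjoint_sdiff_inter A₁ᶜ A₂).symm)
  have hlen : (X ++ Y).length = n := by
    rw [← List.toFinset_card_of_nodup hnd, List.toFinset_append, hX, hY, Finset.union_compl,
      Finset.card_univ, ZMod.card]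
  refine ⟨permOfList _ hnd hlen, Or.inl ?_, Or.inl ?_⟩
  · exact hX ▸ isArc_permOfList hnd hlen (P := []) rfl
  · have hM : ((A₁ ∩ A₂).toList ++ (A₁ᶜ ∩ A₂).toList).toFinset = A₂ := by
      simp [← Finset.union_inter_distrib_right]
    exact hM ▸ isArc_permOfList hnd hlen (P := (A₁ \ A₂).toList) (S := (A₁ᶜ \ A₂).toList)
      (by simp [X, Y])

/-- Any two non-trivial splits (given by blocks `A₁`, `A₂`, each with block and
co-block of size at least 2) form a circular split system: some circular ordering
realizes both as arc/complement cuts. -/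
theorem stmt5 (n : ℕ) [NeZero n] (hn : 4 ≤ n) (A₁ A₂ : Finset (ZMod n))
    (h₁ : 2 ≤ A₁.card) (h₁' : 2 ≤ A₁ᶜ.card) (h₂ : 2 ≤ A₂.card) (h₂' : 2 ≤ A₂ᶜ.card) :
    ∃ σ : Equiv.Perm (ZMod n),
      (IsArc σ A₁ ∨ IsArc σ A₁ᶜ) ∧ (IsArc σ A₂ ∨ IsArc σ A₂ᶜ) :=
  stmt5_general n A₁ A₂
end

section
/- A split system 𝒮 of m non-trivial splits of [n] is circular if and only if the associated m×n binary matrix (rows = indicator vectors of blocks not containing 1, so the first column is zero) has the circular ones property for rows; equivalently, if and only if that matrix has the consecutive ones property for rows. -/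
/-- A split system (splits given by their blocks not containing `0`) is circular if
some circular ordering realizes every split as an arc/complement cut. -/
def CircularSystem {n : ℕ} [NeZero n] (𝒮 : Finset (Finset (ZMod n))) : Prop :=
  ∃ σ : Equiv.Perm (ZMod n), ∀ A ∈ 𝒮, IsArc σ A ∨ IsArc σ Aᶜ

/-- The `true` entries of the row `v` (columns ordered by `ZMod.val`) are consecutive. -/
def RowConsecutiveZ {n : ℕ} (v : ZMod n → Bool) : Prop :=
  ∃ a b : ℕ, ∀ j : ZMod n, v j = true ↔ a ≤ j.val ∧ j.val ≤ b

/-- Consecutive ones property for rows. -/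
def C1R {n m : ℕ} (M : Fin m → ZMod n → Bool) : Prop :=
  ∃ σ : Equiv.Perm (ZMod n), ∀ i, RowConsecutiveZ fun j => M i (σ j)

/-- Circular ones property for rows. -/
def Circ1R {n m : ℕ} (M : Fin m → ZMod n → Bool) : Prop :=
  ∃ σ : Equiv.Perm (ZMod n), ∀ i,
    (RowConsecutiveZ fun j => M i (σ j)) ∨ (RowConsecutiveZ fun j => !(M i (σ j)))

/-!
Write `σ ⁻¹' A` for the positions that the circular ordering `σ` assigns to the block `A`.
Then `A` is an arc of `σ` iff `σ ⁻¹' A` is a cyclic arc of `ZMod n`, and the row of `A` has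
consecutive ones in the column order `σ` iff `σ ⁻¹' A` is a `val`-interval. Intervals are
arcs, and arcs missing `0` are intervals; since cyclic arcs are closed under complement and
rotation, a circular ordering can be rotated so that the position `0` holds the element `0`,
which lies in no block. So circular ⇒ C1R ⇒ Circ1R ⇒ circular.
-/

namespace ZMod

variable {n : ℕ} [NeZero n]

theorem val_sub_eq_ite (a b : ZMod n) :
    (a - b).val = if b.val ≤ a.val then a.val - b.val else a.val + n - b.val := by
  split_ifs with h
  · exact val_sub h
  · have hle : n ≤ (a - b).val + b.val := by
      by_contra! hlt
      have := val_add_of_lt hlt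
      rw [sub_add_cancel] at this
      omega
    have := val_add_val_of_le hle
    rw [sub_add_cancel] at this
    omega

theorem val_sub_lt_iff {i j : ZMod n} {l : ℕ} :
    (j - i).val < l ↔ ∃ k < l, i + (k : ZMod n) = j := by
  constructor
  · intro h
    exact ⟨(j - i).val, h, by rw [natCast_zmod_val, add_sub_cancel]⟩
  · rintro ⟨k, hk, rfl⟩
    rw [add_sub_cancel_left, val_natCast]
    exact (Nat.mod_le k n).trans_lt hk

end ZMod

open ZMod

/-- `{j | (j - i).val < l}` is the arc `i, i + 1, …, i + (l - 1)`; it is all of `ZMod n`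
once `n ≤ l`. -/
def IsCyclicArc {n : ℕ} (s : Set (ZMod n)) : Prop :=
  ∃ (i : ZMod n) (l : ℕ), s = {j | (j - i).val < l}

theorem IsCyclicArc.preimage_add_right {n : ℕ} {s : Set (ZMod n)} (hs : IsCyclicArc s)
    (p : ZMod n) :
    IsCyclicArc ((· + p) ⁻¹' s) := by
  obtain ⟨i, l, rfl⟩ := hs
  exact ⟨i - p, l, Set.ext fun j => by simp [sub_sub_eq_add_sub]⟩

section CyclicArc

variable {n : ℕ} [NeZero n]

theorem isArc_iff_isCyclicArc_preimage (σ : Equiv.Perm (ZMod n)) (A : Finset (ZMod n)) :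
    IsArc σ A ↔ IsCyclicArc (σ ⁻¹' A) := by
  refine exists₂_congr fun i l => ?_
  simp only [Finset.ext_iff, Set.ext_iff, Finset.mem_image, Finset.mem_range, Set.mem_preimage,
    Finset.mem_coe, Set.mem_ofPred_eq, val_sub_lt_iff]
  rw [← σ.forall_congr_right]
  simp only [σ.injective.eq_iff]

theorem IsCyclicArc.compl {s : Set (ZMod n)} (hs : IsCyclicArc s) : IsCyclicArc sᶜ := by
  obtain ⟨i, l, rfl⟩ := hs
  rcases lt_or_ge l n with hl | hl
  · refine ⟨i + l, n - l, Set.ext fun j => ?_⟩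
    have hlv : (l : ZMod n).val = l := val_natCast_of_lt hl
    have := val_lt (j - i)
    simp only [Set.mem_compl_iff, Set.mem_ofPred_eq, not_lt, ← sub_sub]
    rw [val_sub_eq_ite (j - i) l, hlv]
    split_ifs <;> omega
  · exact ⟨i, 0, Set.ext fun j => by simpa using (val_lt (j - i)).trans_le hl⟩

theorem RowConsecutiveZ.isCyclicArc {v : ZMod n → Bool} (hv : RowConsecutiveZ v) :
    IsCyclicArc {j | v j = true} := by
  obtain ⟨a, b, hab⟩ := hv
  by_cases hne : a ≤ b ∧ a < n
  · refine ⟨a, min b (n - 1) + 1 - a, Set.ext fun j => ?_⟩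
    have := val_lt j
    rw [Set.mem_ofPred_eq, hab, Set.mem_ofPred_eq, val_sub_eq_ite, val_natCast_of_lt hne.2]
    split_ifs <;> omega
  · refine ⟨0, 0, Set.ext fun j => ?_⟩
    have := val_lt j
    simp only [Set.mem_ofPred_eq, hab, not_lt_zero, iff_false]
    omega

theorem IsCyclicArc.rowConsecutiveZ {v : ZMod n → Bool} (hv : IsCyclicArc {j | v j = true})
    (h0 : v 0 = false) : RowConsecutiveZ v := by
  obtain ⟨i, l, hs⟩ := hv
  have hmem (j : ZMod n) : v j = true ↔ (j - i).val < l := Set.ext_iff.1 hs j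
  rcases Nat.eq_zero_or_pos l with rfl | hl
  · exact ⟨1, 0, fun j => by rw [hmem]; omega⟩
  have hi : ¬(0 - i).val < l := fun h => by simp [(hmem 0).2 h] at h0
  rw [val_sub_eq_ite, val_zero] at hi
  refine ⟨i.val, i.val + l - 1, fun j => ?_⟩
  have := val_lt j
  rw [hmem, val_sub_eq_ite]
  split_ifs at hi ⊢ <;> omega

end CyclicArc

section SplitMatrix

variable {n m : ℕ} {M : Fin m → ZMod n → Bool}

theorem C1R.circ1R (h : C1R M) : Circ1R M :=
  let ⟨σ, hσ⟩ := h
  ⟨σ, fun i => Or.inl (hσ i)⟩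

variable [NeZero n] {𝒮 : Finset (Finset (ZMod n))}

theorem c1R_of_circularSystem (h0 : ∀ A ∈ 𝒮, (0 : ZMod n) ∉ A)
    (hrow : ∀ i, ∃ A ∈ 𝒮, M i = fun j => decide (j ∈ A)) (h : CircularSystem 𝒮) :
    C1R M := by
  obtain ⟨σ, hσ⟩ := h
  let τ := (Equiv.addRight (σ.symm 0)).trans σ
  have hτ0 : τ 0 = 0 := by simp [τ]
  refine ⟨τ, fun i => ?_⟩
  obtain ⟨A, hA, hMi⟩ := hrow i
  have hArc : IsCyclicArc (σ ⁻¹' A) := by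
    rcases hσ A hA with hA' | hA'
    · exact (isArc_iff_isCyclicArc_preimage σ A).1 hA'
    · simpa using ((isArc_iff_isCyclicArc_preimage σ Aᶜ).1 hA').compl
  rw [hMi]
  refine IsCyclicArc.rowConsecutiveZ ?_ (by simpa [hτ0] using h0 A hA)
  convert hArc.preimage_add_right (σ.symm 0) using 1
  ext j
  simp only [τ, Set.mem_ofPred_eq, Set.mem_preimage, Equiv.trans_apply, Equiv.coe_addRight,
    Finset.mem_coe]
  exact decide_eq_true_iff

theorem circularSystem_of_circ1R (hsplit : ∀ A ∈ 𝒮, ∃ i, M i = fun j => decide (j ∈ A))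
    (h : Circ1R M) : CircularSystem 𝒮 := by
  obtain ⟨σ, hσ⟩ := h
  refine ⟨σ, fun A hA => ?_⟩
  obtain ⟨i, hMi⟩ := hsplit A hA
  have hrc := hσ i
  simp only [hMi, isArc_iff_isCyclicArc_preimage] at hrc ⊢
  refine hrc.imp (fun hrc => ?_) (fun hrc => ?_) <;>
  · convert hrc.isCyclicArc using 1
    ext j
    simp

end SplitMatrix

theorem stmt10_general (n m : ℕ) [NeZero n] (𝒮 : Finset (Finset (ZMod n)))
    (h𝒮 : ∀ A ∈ 𝒮, (0 : ZMod n) ∉ A ∧ 2 ≤ A.card ∧ 2 ≤ Aᶜ.card)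
    (M : Fin m → ZMod n → Bool)
    (hrows : Finset.univ.image M = 𝒮.image fun A => fun j => decide (j ∈ A)) :
    (CircularSystem 𝒮 ↔ Circ1R M) ∧ (CircularSystem 𝒮 ↔ C1R M) := by
  have hrow : ∀ i, ∃ A ∈ 𝒮, M i = fun j => decide (j ∈ A) := fun i => by
    obtain ⟨A, hA, h⟩ :=
      Finset.mem_image.1 (hrows ▸ Finset.mem_image_of_mem M (Finset.mem_univ i))
    exact ⟨A, hA, h.symm⟩
  have hsplit : ∀ A ∈ 𝒮, ∃ i, M i = fun j => decide (j ∈ A) := fun A hA => by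
    obtain ⟨i, -, h⟩ := Finset.mem_image.1 (hrows ▸ Finset.mem_image_of_mem _ hA)
    exact ⟨i, h⟩
  have hC1R := c1R_of_circularSystem (fun A hA => (h𝒮 A hA).1) hrow
  have hCirc := circularSystem_of_circ1R hsplit
  exact ⟨⟨fun h => (hC1R h).circ1R, hCirc⟩, ⟨hC1R, fun h => hCirc h.circ1R⟩⟩

/-- A split system of `m` non-trivial splits is circular iff its associated binary
matrix (rows = indicators of the blocks not containing `0`) is Circ1R, equivalently
iff that matrix is C1R. -/
theorem stmt10 (n m : ℕ) [NeZero n] (hn : 4 ≤ n) (𝒮 : Finset (Finset (ZMod n)))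
    (h𝒮 : ∀ A ∈ 𝒮, (0 : ZMod n) ∉ A ∧ 2 ≤ A.card ∧ 2 ≤ Aᶜ.card)
    (hm : 𝒮.card = m) (M : Fin m → ZMod n → Bool)
    (hinj : Function.Injective M)
    (hrows : Finset.univ.image M = 𝒮.image fun A => fun j => decide (j ∈ A)) :
    (CircularSystem 𝒮 ↔ Circ1R M) ∧ (CircularSystem 𝒮 ↔ C1R M) :=
  stmt10_general n m 𝒮 h𝒮 M hrows
end
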